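/- arXiv:2512.22074 — 4 statements merged into one kernel-verified Lean document; each statement's English description precedes it below -/
import Mathlib

section
/- If R is a right Kasch ring (every simple right R-module embeds into R), then the right annihilator of the right socle equals the Jacobson radical: r(soc(R_R)) = J(R). -/
universe u

/-- The right annihilator of a subset `X` of a ring. -/
def rAnn {R : Type*} [Ring R] (X : Set R) : Set R := {a | ∀ x ∈ X, x * a = 0}

/-- The right socle of `R`: the sum of all simple right ideals. -/
def rightSocle (R : Type*) [Ring R] : Submodule Rᵐᵒᵖ R :=
  sSup {T : Submodule Rᵐᵒᵖ R | IsSimpleModule Rᵐᵒᵖ ↥T}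

/-- `R` is right Kasch: every simple right `R`-module is isomorphic to a right
ideal of `R`. -/
def RightKasch (R : Type u) [Ring R] : Prop :=
  ∀ (M : Type u) [AddCommGroup M] [Module Rᵐᵒᵖ M], IsSimpleModule Rᵐᵒᵖ M →
    ∃ T : Submodule Rᵐᵒᵖ R, Nonempty (M ≃ₗ[Rᵐᵒᵖ] ↥T)

/-!
The Jacobson radical is left-right symmetric (Jacobson's lemma: `a b + 1` is a unit iff `b a + 1`
is), so `J(R)` may be computed from maximal right ideals. The right socle is semisimple, hence
annihilated by `J(R)`. Conversely, in a right Kasch ring every simple right module `R / m` embeds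
in the socle, so an element annihilating the socle lies in every maximal right ideal `m`.
-/

open MulOpposite

theorem IsUnit.mul_add_one_comm {R : Type*} [Ring R] {a b : R} (h : IsUnit (a * b + 1)) :
    IsUnit (b * a + 1) := by
  set v : R := ↑h.unit⁻¹
  refine ⟨⟨b * a + 1, 1 - b * v * a, ?_, ?_⟩, rfl⟩
  · calc (b * a + 1) * (1 - b * v * a) = 1 + b * a - b * ((a * b + 1) * v) * a := by noncomm_ring
      _ = 1 := by rw [h.mul_val_inv]; noncomm_ring
  · calc (1 - b * v * a) * (b * a + 1) = 1 + b * a - b * (v * (a * b + 1)) * a := by noncomm_ring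
      _ = 1 := by rw [h.val_inv_mul]; noncomm_ring

namespace Ring

variable {R : Type*} [Ring R]

theorem exists_mul_add_one_eq_one {b : R} (hb : b ∈ jacobson R) : ∃ s, s * (b + 1) = 1 := by
  rw [← Ideal.jacobson_bot] at hb
  obtain ⟨s, hs⟩ := Ideal.exists_mul_add_sub_mem_of_mem_jacobson b hb
  exact ⟨s, sub_eq_zero.mp hs⟩

theorem isUnit_add_one {b : R} (hb : b ∈ jacobson R) : IsUnit (b + 1) := by
  obtain ⟨s, hs⟩ := exists_mul_add_one_eq_one hb
  -- The left inverse `s = 1 - s b` of `b + 1` is itself left invertible, hence a unit.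
  have hs_eq : s = -(s * b) + 1 := by rw [← hs]; noncomm_ring
  obtain ⟨t, ht⟩ := exists_mul_add_one_eq_one (neg_mem ((jacobson R).mul_mem_left s hb))
  rw [← hs_eq] at ht
  have hbt : b + 1 = t := (left_inv_eq_right_inv ht hs).symm
  exact ⟨⟨b + 1, s, by rw [hbt, ht], hs⟩, rfl⟩

theorem mem_jacobson_iff_forall_isUnit {a : R} : a ∈ jacobson R ↔ ∀ y, IsUnit (y * a + 1) := by
  refine ⟨fun ha y ↦ isUnit_add_one ((jacobson R).mul_mem_left y ha), fun h ↦ ?_⟩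
  rw [← Ideal.jacobson_bot, Ideal.mem_jacobson_iff]
  intro y
  refine ⟨↑(h y).unit⁻¹, ?_⟩
  rw [Ideal.mem_bot, mul_assoc, ← mul_add_one, IsUnit.val_inv_mul, sub_self]

theorem op_mem_jacobson_iff {a : R} : op a ∈ jacobson Rᵐᵒᵖ ↔ a ∈ jacobson R := by
  simp only [mem_jacobson_iff_forall_isUnit, op_surjective.forall, ← op_mul, ← op_one, ← op_add,
    isUnit_op]
  exact forall_congr' fun _ ↦ ⟨.mul_add_one_comm, .mul_add_one_comm⟩

end Ring

theorem Ideal.annihilator_quotient_le {S : Type*} [Ring S] (m : Ideal S) :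
    Module.annihilator S (S ⧸ m) ≤ m := fun r hr ↦ by
  have := Module.mem_annihilator.mp hr (Submodule.Quotient.mk 1)
  simpa using (Submodule.Quotient.mk_eq_zero m).mp this

theorem Module.annihilator_le_jacobson {S M : Type*} [Ring S] [AddCommGroup M] [Module S M]
    (h : ∀ m : Ideal S, m.IsMaximal → ∃ f : (S ⧸ m) →ₗ[S] M, Function.Injective f) :
    Module.annihilator S M ≤ Ring.jacobson S := by
  rw [Ring.jacobson_eq_sInf_isMaximal]
  refine le_sInf fun m hm ↦ ?_
  obtain ⟨f, hf⟩ := h m hm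
  exact (f.annihilator_le_of_injective hf).trans m.annihilator_quotient_le

instance isSemisimpleModule_rightSocle (R : Type*) [Ring R] :
    IsSemisimpleModule Rᵐᵒᵖ (rightSocle R) := by
  rw [rightSocle, sSup_eq_iSup]
  exact isSemisimpleModule_biSup_of_isSemisimpleModule_submodule fun _ (_ : IsSimpleModule _ _) ↦
    inferInstance

theorem mem_rAnn_iff_op_mem_annihilator {R : Type*} [Ring R] (N : Submodule Rᵐᵒᵖ R) {a : R} :
    a ∈ rAnn (N : Set R) ↔ op a ∈ Module.annihilator Rᵐᵒᵖ N := by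
  simp [rAnn, Module.mem_annihilator, Subtype.ext_iff]

namespace RightKasch

variable {R : Type u} [Ring R]

theorem exists_injective_rightSocle (h : RightKasch R) (M : Type u) [AddCommGroup M]
    [Module Rᵐᵒᵖ M] [IsSimpleModule Rᵐᵒᵖ M] :
    ∃ f : M →ₗ[Rᵐᵒᵖ] rightSocle R, Function.Injective f := by
  obtain ⟨T, ⟨e⟩⟩ := h M inferInstance
  have hT : T ≤ rightSocle R := le_sSup (IsSimpleModule.congr e.symm)
  exact ⟨Submodule.inclusion hT ∘ₗ e.toLinearMap,
    (Submodule.inclusion_injective hT).comp e.injective⟩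

theorem annihilator_rightSocle (h : RightKasch R) :
    Module.annihilator Rᵐᵒᵖ (rightSocle R) = Ring.jacobson Rᵐᵒᵖ := by
  refine le_antisymm (Module.annihilator_le_jacobson fun m hm ↦ ?_)
    (IsSemisimpleModule.jacobson_le_annihilator _ _)
  have : IsSimpleModule Rᵐᵒᵖ (Rᵐᵒᵖ ⧸ m) := isSimpleModule_iff_isCoatom.mpr hm.out
  exact h.exists_injective_rightSocle _

end RightKasch

/-- If `R` is right Kasch, then the right annihilator of the right socle equals
the Jacobson radical: `r(soc(R_R)) = J(R)`. -/
theorem stmt11 {R : Type u} [Ring R] (h : RightKasch R) :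
    rAnn (rightSocle R : Set R) = (Ideal.jacobson (⊥ : Ideal R) : Set R) := by
  ext a
  rw [SetLike.mem_coe, Ideal.jacobson_bot, ← Ring.op_mem_jacobson_iff, ← h.annihilator_rightSocle,
    mem_rAnn_iff_op_mem_annihilator]
end

section
/- For a maximal right ideal M of a ring R, the following are equivalent: (1) rl(M) = M; (2) l(M) ≠ 0; (3) R/M is isomorphic to a submodule of soc(R_R); (4) Hom_R(R/M, R) ≠ 0. -/
/-! Right ideals of `R` are modelled as `Submodule Rᵐᵒᵖ R`.

Evaluation at the class of `1` identifies `Hom_R(R/M, R)` with `l(M)`, which gives (2) ⇔ (4).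
The right ideal `rl(M)` contains `M`, so by maximality it is `M` or `R`, and it is `R` exactly
when `1 ∈ rl(M)`, i.e. when `l(M) = 0`; this gives (1) ⇔ (2). Finally `R/M` is simple, so a
nonzero map `R/M → R` is injective with simple image, which lies in the socle: (3) ⇔ (4). -/

def lAnn {R : Type*} [Ring R] (X : Set R) : Set R := {a | ∀ x ∈ X, a * x = 0}

section

variable {R : Type*} [Ring R]

theorem zero_mem_lAnn (X : Set R) : (0 : R) ∈ lAnn X := fun x _ => zero_mul x

theorem lAnn_eq_singleton_zero_iff {X : Set R} : lAnn X = {0} ↔ ∀ a ∈ lAnn X, a = 0 :=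
  ⟨fun h a ha => by rwa [h] at ha,
    fun h => Set.eq_singleton_iff_unique_mem.mpr ⟨zero_mem_lAnn X, h⟩⟩

theorem one_mem_rAnn_iff {X : Set R} : (1 : R) ∈ rAnn X ↔ ∀ x ∈ X, x = 0 := by
  simp [rAnn]

theorem subset_rAnn_lAnn (X : Set R) : X ⊆ rAnn (lAnn X) := fun x hx _ ha => ha x hx

def rAnnRightIdeal (X : Set R) : Submodule Rᵐᵒᵖ R where
  carrier := rAnn X
  zero_mem' _ _ := mul_zero _
  add_mem' ha hb x hx := by rw [mul_add, ha x hx, hb x hx, add_zero]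
  smul_mem' r a ha x hx := by
    change x * (a * r.unop) = 0
    rw [← mul_assoc, ha x hx, zero_mul]

theorem coe_rAnnRightIdeal (X : Set R) : (rAnnRightIdeal X : Set R) = rAnn X := rfl

theorem Submodule.eq_top_of_one_mem_op {N : Submodule Rᵐᵒᵖ R} (h : (1 : R) ∈ N) : N = ⊤ :=
  N.eq_top_iff'.mpr fun x => by simpa using N.smul_mem (MulOpposite.op x) h

theorem rAnn_lAnn_eq_iff_of_isCoatom {M : Submodule Rᵐᵒᵖ R} (hM : IsCoatom M) :
    rAnn (lAnn (M : Set R)) = M ↔ lAnn (M : Set R) ≠ {0} := by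
  rw [ne_eq, lAnn_eq_singleton_zero_iff, ← one_mem_rAnn_iff, ← coe_rAnnRightIdeal,
    SetLike.coe_set_eq]
  have hle : M ≤ rAnnRightIdeal (lAnn (M : Set R)) := subset_rAnn_lAnn _
  constructor
  · rintro h h1
    exact hM.1 (h ▸ Submodule.eq_top_of_one_mem_op h1)
  · intro h1
    refine (hle.eq_or_lt.resolve_right fun hlt => h1 ?_).symm
    rw [hM.2 _ hlt]
    exact Submodule.mem_top

theorem comp_mkQ_eq_toLinearMap (M : Submodule Rᵐᵒᵖ R) (φ : (R ⧸ M) →ₗ[Rᵐᵒᵖ] R) :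
    φ ∘ₗ M.mkQ = DistribSMul.toLinearMap Rᵐᵒᵖ R (φ (Submodule.Quotient.mk 1)) :=
  LinearMap.ext_ring_op (by simp)

theorem exists_ne_zero_hom_quotient_iff (M : Submodule Rᵐᵒᵖ R) :
    (∃ φ : (R ⧸ M) →ₗ[Rᵐᵒᵖ] R, φ ≠ 0) ↔ lAnn (M : Set R) ≠ {0} := by
  simp only [ne_eq, lAnn_eq_singleton_zero_iff, not_forall, exists_prop]
  constructor
  · rintro ⟨φ, hφ⟩
    have h := comp_mkQ_eq_toLinearMap M φ
    refine ⟨φ (Submodule.Quotient.mk 1), fun m hm => ?_, fun h0 => hφ ?_⟩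
    · simpa [(Submodule.Quotient.mk_eq_zero M).mpr hm] using (LinearMap.congr_fun h m).symm
    · refine (LinearMap.cancel_right M.mkQ_surjective).mp (h.trans ?_)
      ext
      simp [h0]
  · rintro ⟨a, ha, ha0⟩
    refine ⟨M.liftQ (DistribSMul.toLinearMap Rᵐᵒᵖ R a) fun m hm => ha m hm, fun h => ha0 ?_⟩
    exact (mul_one a).symm.trans (LinearMap.congr_fun h (Submodule.Quotient.mk 1))

theorem exists_ne_zero_hom_iff_exists_le_rightSocle {M : Submodule Rᵐᵒᵖ R} (hM : IsCoatom M) :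
    (∃ φ : (R ⧸ M) →ₗ[Rᵐᵒᵖ] R, φ ≠ 0) ↔
      ∃ T : Submodule Rᵐᵒᵖ R, T ≤ rightSocle R ∧ Nonempty ((R ⧸ M) ≃ₗ[Rᵐᵒᵖ] T) := by
  have := isSimpleModule_iff_isCoatom.mpr hM
  constructor
  · rintro ⟨φ, hφ⟩
    let e := LinearEquiv.ofInjective φ (φ.injective_of_ne_zero hφ)
    exact ⟨LinearMap.range φ, le_sSup (IsSimpleModule.congr e.symm), ⟨e⟩⟩
  · rintro ⟨T, -, ⟨e⟩⟩
    have := IsSimpleModule.nontrivial Rᵐᵒᵖ (R ⧸ M)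
    obtain ⟨x, hx⟩ := exists_ne (0 : R ⧸ M)
    refine ⟨T.subtype ∘ₗ e.toLinearMap, fun h => hx (e.injective ?_)⟩
    simpa using LinearMap.congr_fun h x

end

/-- For a maximal right ideal `M` of `R`, TFAE:
(1) `rl(M) = M`; (2) `l(M) ≠ 0`; (3) `R/M` embeds into `soc(R_R)`;
(4) `Hom_R(R/M, R) ≠ 0`. -/
theorem stmt12 {R : Type*} [Ring R] (M : Submodule Rᵐᵒᵖ R) (hM : IsCoatom M) :
    List.TFAE [
      rAnn (lAnn (M : Set R)) = (M : Set R),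
      lAnn (M : Set R) ≠ {0},
      ∃ T : Submodule Rᵐᵒᵖ R, T ≤ rightSocle R ∧ Nonempty ((R ⧸ M) ≃ₗ[Rᵐᵒᵖ] ↥T),
      ∃ φ : (R ⧸ M) →ₗ[Rᵐᵒᵖ] R, φ ≠ 0 ] := by
  tfae_have 1 ↔ 2 := rAnn_lAnn_eq_iff_of_isCoatom hM
  tfae_have 4 ↔ 2 := exists_ne_zero_hom_quotient_iff M
  tfae_have 4 ↔ 3 := exists_ne_zero_hom_iff_exists_le_rightSocle hM
  tfae_finish
end

section
/- Let R be a right Kasch ring and J a superfluous right ideal satisfying rl(J) = J. Then l(J) has nonzero intersection with every nonzero left ideal X satisfying lr(X) = X. -/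
open Pointwise

universe u

/-- A subset of a ring is a right ideal. -/
def IsRightIdeal {R : Type*} [Ring R] (I : Set R) : Prop :=
  (0 : R) ∈ I ∧ (∀ a b : R, a ∈ I → b ∈ I → a + b ∈ I) ∧ ∀ a ∈ I, ∀ r : R, a * r ∈ I

/-- A subset of a ring is a left ideal. -/
def IsLeftIdeal {R : Type*} [Ring R] (I : Set R) : Prop :=
  (0 : R) ∈ I ∧ (∀ a b : R, a ∈ I → b ∈ I → a + b ∈ I) ∧ ∀ a ∈ I, ∀ r : R, r * a ∈ I

/-! A proper right ideal `K` lies in a maximal one `m`, and the Kasch embedding of the simple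
module `R ⧸ m` sends `1 + m` to a nonzero `t` with `t K ⊆ t m = 0`. So `l(J + r(X)) = 0` forces
`J + r(X) = R`, superfluity of `J` gives `r(X) = R`, and then `X = lr(X) = l(R) = 0`. -/

section

variable {R : Type*} [Ring R]

instance Module.Finite.mulOpposite_self : Module.Finite Rᵐᵒᵖ R := by
  refine ⟨⟨{1}, Submodule.eq_top_iff'.2 fun x => ?_⟩⟩
  rw [Finset.coe_singleton, Submodule.mem_span_singleton]
  exact ⟨MulOpposite.op x, by rw [op_smul_eq_mul, one_mul]⟩

theorem Submodule.one_notMem_of_isCoatom {m : Submodule Rᵐᵒᵖ R} (hm : IsCoatom m) :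
    (1 : R) ∉ m := fun h1 =>
  hm.1 <| Submodule.eq_top_iff'.2 fun x => by
    simpa only [op_smul_eq_mul, one_mul] using m.smul_mem (MulOpposite.op x) h1

theorem zero_mem_rAnn (X : Set R) : (0 : R) ∈ rAnn X := fun x _ => mul_zero x

theorem isRightIdeal_rAnn (X : Set R) : IsRightIdeal (rAnn X) :=
  ⟨zero_mem_rAnn X, fun a b ha hb x hx => by rw [mul_add, ha x hx, hb x hx, add_zero],
    fun a ha r x hx => by rw [← mul_assoc, ha x hx, zero_mul]⟩

theorem lAnn_univ : lAnn (Set.univ : Set R) = {0} := by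
  ext a
  refine ⟨fun ha => by simpa using ha 1 trivial, ?_⟩
  rintro rfl x -
  exact zero_mul x

theorem lAnn_add {A B : Set R} (hA : (0 : R) ∈ A) (hB : (0 : R) ∈ B) :
    lAnn (A + B) = lAnn A ∩ lAnn B := by
  ext t
  refine ⟨fun ht => ⟨fun a ha => ?_, fun b hb => ?_⟩, ?_⟩
  · simpa using ht (a + 0) (Set.add_mem_add ha hB)
  · simpa using ht (0 + b) (Set.add_mem_add hA hb)
  · rintro ⟨htA, htB⟩ _ ⟨a, ha, b, hb, rfl⟩
    rw [mul_add, htA a ha, htB b hb, add_zero]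

theorem lAnn_anti {A B : Set R} (h : A ⊆ B) : lAnn B ⊆ lAnn A :=
  fun _ ht a ha => ht a (h ha)

namespace IsRightIdeal

theorem add {I K : Set R} (hI : IsRightIdeal I) (hK : IsRightIdeal K) : IsRightIdeal (I + K) := by
  refine ⟨⟨0, hI.1, 0, hK.1, add_zero 0⟩, ?_, ?_⟩
  · rintro _ _ ⟨a, ha, b, hb, rfl⟩ ⟨a', ha', b', hb', rfl⟩
    exact ⟨a + a', hI.2.1 _ _ ha ha', b + b', hK.2.1 _ _ hb hb', add_add_add_comm a a' b b'⟩
  · rintro _ ⟨a, ha, b, hb, rfl⟩ r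
    exact ⟨a * r, hI.2.2 a ha r, b * r, hK.2.2 b hb r, (add_mul a b r).symm⟩

def toSubmodule {I : Set R} (hI : IsRightIdeal I) : Submodule Rᵐᵒᵖ R where
  carrier := I
  zero_mem' := hI.1
  add_mem' := hI.2.1 _ _
  smul_mem' c a ha := by
    rw [← MulOpposite.op_unop c, op_smul_eq_mul]
    exact hI.2.2 a ha c.unop

end IsRightIdeal

end

namespace RightKasch

variable {R : Type*} [Ring R]

theorem exists_ne_zero_mem_lAnn_of_isCoatom (hK : RightKasch R) {m : Submodule Rᵐᵒᵖ R}
    (hm : IsCoatom m) : ∃ t : R, t ≠ 0 ∧ t ∈ lAnn (m : Set R) := by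
  have : IsSimpleModule Rᵐᵒᵖ (R ⧸ m) := isSimpleModule_iff_isCoatom.2 hm
  obtain ⟨T, ⟨g⟩⟩ := hK (R ⧸ m) inferInstance
  refine ⟨g (Submodule.Quotient.mk 1), fun h0 => ?_, fun k hk => ?_⟩
  · have h1 : (Submodule.Quotient.mk 1 : R ⧸ m) = 0 :=
      g.injective (by rw [map_zero]; exact Subtype.ext h0)
    exact Submodule.one_notMem_of_isCoatom hm ((Submodule.Quotient.mk_eq_zero m).1 h1)
  · have hk1 : MulOpposite.op k • (Submodule.Quotient.mk 1 : R ⧸ m) = 0 := by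
      rw [← Submodule.Quotient.mk_smul, op_smul_eq_mul, one_mul,
        Submodule.Quotient.mk_eq_zero]
      exact hk
    have := congrArg Subtype.val (congrArg g hk1)
    rwa [map_smul, map_zero, Submodule.coe_smul, op_smul_eq_mul] at this

theorem eq_univ_of_lAnn_eq_zero (hK : RightKasch R) {K : Set R} (hKr : IsRightIdeal K)
    (hK0 : lAnn K = {0}) : K = Set.univ := by
  by_contra hne
  have hp : hKr.toSubmodule ≠ ⊤ := fun h => hne (congrArg SetLike.coe h)
  obtain ⟨m, hm, hpm⟩ := (IsCoatomic.eq_top_or_exists_le_coatom _).resolve_left hp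
  obtain ⟨t, ht0, ht⟩ := hK.exists_ne_zero_mem_lAnn_of_isCoatom hm
  have htK : t ∈ lAnn K := lAnn_anti hpm ht
  exact ht0 (by rwa [hK0] at htK)

end RightKasch

theorem stmt13_general {R : Type u} [Ring R] (hK : RightKasch R)
    (J : Set R) (hJ : IsRightIdeal J)
    (hsup : ∀ K : Set R, IsRightIdeal K → J + K = Set.univ → K = Set.univ) :
    ∀ X : Set R, IsLeftIdeal X → lAnn (rAnn X) = X → X ≠ {0} →
      lAnn J ∩ X ≠ {0} := by
  intro X _ hXD hX0 hJX
  have hsum : J + rAnn X = Set.univ :=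
    hK.eq_univ_of_lAnn_eq_zero (hJ.add (isRightIdeal_rAnn X))
      (by rw [lAnn_add hJ.1 (zero_mem_rAnn X), hXD, hJX])
  have hrX : rAnn X = Set.univ := hsup _ (isRightIdeal_rAnn X) hsum
  exact hX0 (by rw [← hXD, hrX, lAnn_univ])

/-- Let `R` be a right Kasch ring and `J` a superfluous right ideal with
`rl(J) = J`. Then `l(J)` meets every nonzero left ideal `X` with `lr(X) = X`
nontrivially. -/
theorem stmt13 {R : Type u} [Ring R] (hK : RightKasch R)
    (J : Set R) (hJ : IsRightIdeal J)
    (hsup : ∀ K : Set R, IsRightIdeal K → J + K = Set.univ → K = Set.univ)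
    (hD : rAnn (lAnn J) = J) :
    ∀ X : Set R, IsLeftIdeal X → lAnn (rAnn X) = X → X ≠ {0} →
      lAnn J ∩ X ≠ {0} :=
  stmt13_general hK J hJ hsup
end

section
/- Let S be a local commutative integral domain that is not a field, with residue field m = S/J(S), and suppose there is a ring embedding σ: S → m. Equip m with the S-bimodule structure K where the right action is the canonical one and the left action is s·x = σ(s)x. Then K is simple as a right S-module and has zero socle as a left S-module. -/
/-- Let `S` be a local commutative integral domain that is not a field, with
residue field `m = S/J(S)`, and suppose `σ : S → m` is a ring embedding. Equip
`m` with the canonical right `S`-action and the left `S`-action `s · x = σ(s)x`.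
Then `m` is simple as a right `S`-module and has zero socle as a left
`S`-module (i.e. it has no simple submodules for the `σ`-twisted action). -/
theorem stmt18 (S : Type*) [CommRing S] [IsLocalRing S] [IsDomain S]
    (hS : ¬ IsField S) (σ : S →+* IsLocalRing.ResidueField S)
    (hσ : Function.Injective σ) :
    IsSimpleModule S (IsLocalRing.ResidueField S) ∧
    (letI : Module S (IsLocalRing.ResidueField S) :=
        Module.compHom (IsLocalRing.ResidueField S) σ
     sSup {T : Submodule S (IsLocalRing.ResidueField S) |
        IsSimpleModule S ↥T} = ⊥) := by
  constructor
  · exact isSimpleModule_iff_quot_maximal.mpr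
      ⟨_, IsLocalRing.maximalIdeal.isMaximal S, ⟨LinearEquiv.refl _ _⟩⟩
  · letI : Module S (IsLocalRing.ResidueField S) :=
      Module.compHom (IsLocalRing.ResidueField S) σ
    rw [sSup_eq_bot]
    rintro T hT
    haveI : IsSimpleModule S T := hT
    exfalso
    apply hS
    rw [IsLocalRing.isField_iff_maximalIdeal_eq]
    have hmax : (Module.annihilator S T).IsMaximal :=
      IsSimpleModule.annihilator_isMaximal
    have hann : Module.annihilator S T = IsLocalRing.maximalIdeal S :=
      IsLocalRing.eq_maximalIdeal hmax
    haveI : Nontrivial T := IsSimpleModule.nontrivial S T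
    obtain ⟨x, hx0⟩ := exists_ne (0 : T)
    rw [eq_bot_iff]
    intro s hs
    rw [← hann] at hs
    have h1 : s • x = 0 := Module.mem_annihilator.mp hs x
    have h2 : σ s * (x : IsLocalRing.ResidueField S) = 0 :=
      congrArg Subtype.val h1
    rcases mul_eq_zero.mp h2 with h | h
    · have : s = 0 := hσ (by simpa using h)
      simp [this]
    · exact absurd (Subtype.ext h) hx0
end
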